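/- arXiv:2407.16561 — 2 statements merged into one kernel-verified Lean document; each statement's English description precedes it below -/
import Mathlib

section
/- For natural numbers n ≥ 1, k, and m with 1 ≤ m ≤ n, the generalized binomial coefficient satisfies the subtraction recursion C(n, k, m) = C(n-1, k, m-1) - C(n-1, k-1, m-1), where C(n-1, k-1, m-1) is interpreted as 0 when k = 0. -/
/-! `kravC n k m` is the coefficient of `x ^ k` in `(1 + x) ^ (n - m) * (1 - x) ^ m`. Multiplying by
one more factor `1 - x` subtracts the coefficient of `x ^ (k - 1)`, which is the recursion. -/

open Finset

/-- Generalized binomial (Kravchuk) coefficient: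
`C(n,k,m) = Σ_{l=0}^{m} (-1)^l * binom(n-m, k-l) * binom(m, l)`,
with the convention that the binomial vanishes for a negative lower index
(encoded by the `if l ≤ k` guard, since we use natural subtraction). -/
def kravC (n k m : ℕ) : ℤ :=
  ∑ l ∈ Finset.range (m + 1),
    (-1 : ℤ) ^ l * (if l ≤ k then ((n - m).choose (k - l) : ℤ) else 0) * (m.choose l : ℤ)

open Polynomial

theorem Polynomial.coeff_mul_one_sub_X {R : Type*} [Ring R] (p : R[X]) (k : ℕ) :
    (p * (1 - X)).coeff k = p.coeff k - if k = 0 then 0 else p.coeff (k - 1) := by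
  rw [mul_one_sub, coeff_sub]
  cases k with
  | zero => simp
  | succ k => simp [coeff_mul_X]

theorem Polynomial.coeff_mul_one_sub_X_pow {R : Type*} [CommRing R] (p : R[X]) (m k : ℕ) :
    (p * (1 - X) ^ m).coeff k =
      ∑ l ∈ range (m + 1), (-1) ^ l * (if l ≤ k then p.coeff (k - l) else 0) * m.choose l := by
  rw [← neg_add_eq_sub, add_pow (-X), mul_sum, finsetSum_coeff]
  refine sum_congr rfl fun l _ => ?_
  rw [one_pow, mul_one, neg_pow, ← C_eq_natCast, ← C_1, ← C_neg, ← C_pow,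
    show p * (C ((-1) ^ l) * X ^ l * C (m.choose l : R)) =
        p * X ^ l * C ((-1) ^ l * (m.choose l : R)) by rw [C_mul]; ring,
    coeff_mul_C, coeff_mul_X_pow']
  ring

theorem kravC_eq_coeff (n k m : ℕ) :
    kravC n k m = ((1 + X : ℤ[X]) ^ (n - m) * (1 - X) ^ m).coeff k := by
  simp only [kravC, coeff_mul_one_sub_X_pow, coeff_one_add_X_pow]

theorem kravC_sub_recursion_general (n k m : ℕ) (hm1 : 1 ≤ m) :
    kravC n k m = kravC (n - 1) k (m - 1) - (if k = 0 then 0 else kravC (n - 1) (k - 1) (m - 1)) := by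
  obtain ⟨m, rfl⟩ := Nat.exists_eq_add_of_le' hm1
  rw [kravC_eq_coeff, kravC_eq_coeff, kravC_eq_coeff, pow_succ, ← mul_assoc, coeff_mul_one_sub_X,
    Nat.add_sub_cancel, Nat.sub_sub, add_comm 1 m]

theorem kravC_sub_recursion (n k m : ℕ) (hn : 1 ≤ n) (hm1 : 1 ≤ m) (hm : m ≤ n) :
    kravC n k m = kravC (n - 1) k (m - 1) - (if k = 0 then 0 else kravC (n - 1) (k - 1) (m - 1)) :=
  kravC_sub_recursion_general n k m hm1
end

section
/- For all natural numbers n and k, k' ≤ n, the weighted row orthogonality relation Σ_{m=0}^{n} binom(n, m) * C(n, k, m) * C(n, k', m) equals 2^n * binom(n, k) if k = k' and equals 0 if k ≠ k'. -/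
/-!
`C(n, k, m)` is the coefficient of `x ^ k` in `(1 - x) ^ m * (1 + x) ^ (n - m)`. Multiplying
this generating function in `x` by the same one in `y` and summing with weights `binom(n, m)`,
the binomial theorem collapses the sum to `((1 - x)(1 - y) + (1 + x)(1 + y)) ^ n = 2 ^ n (1 + x y) ^ n`,
whose coefficient of `x ^ k y ^ k'` is `2 ^ n binom(n, k)` if `k = k'` and `0` otherwise.
Bivariate polynomials are modelled as `R[X][X]`, with `x = X` and `y = C X`.
-/

open Finset

open Polynomial

theorem one_sub_X_pow_eq_sum {R : Type*} [CommRing R] (m : ℕ) :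
    ((1 : R[X]) - X) ^ m = ∑ l ∈ range (m + 1), C ((-1) ^ l * (m.choose l : R)) * X ^ l := by
  rw [sub_eq_neg_add, add_pow]
  refine sum_congr rfl fun l _ => ?_
  rw [one_pow, mul_one, neg_pow, C_mul, C_pow, C_neg, C_1, map_natCast]
  ring

theorem coeff_coeff_map_C_mul_C {R : Type*} [Semiring R] (p q : R[X]) (i j : ℕ) :
    ((p.map C * C q).coeff i).coeff j = p.coeff i * q.coeff j := by
  rw [coeff_mul_C, coeff_map, coeff_C_mul]

theorem coeff_coeff_one_add_C_X_mul_X_pow {R : Type*} [CommSemiring R] (n i j : ℕ) :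
    (((1 + C X * X : R[X][X]) ^ n).coeff i).coeff j = if i = j then (n.choose i : R) else 0 := by
  have h : (1 + C X * X : R[X][X]) ^ n = ((1 + X) ^ n).comp (C X * X) := by
    simp [add_comp, pow_comp]
  rw [h, comp_C_mul_X_coeff, coeff_one_add_X_pow, coeff_natCast_mul, coeff_X_pow]
  simp [eq_comm]

noncomputable def kravchukGen (n m : ℕ) : ℤ[X] := (1 - X) ^ m * (1 + X) ^ (n - m)

theorem kravC_eq_coeff_kravchukGen (n k m : ℕ) : kravC n k m = (kravchukGen n m).coeff k := by
  rw [kravchukGen, one_sub_X_pow_eq_sum, sum_mul, finsetSum_coeff, kravC]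
  refine sum_congr rfl fun l _ => ?_
  rw [eq_comm, mul_assoc, coeff_C_mul, coeff_X_pow_mul', coeff_one_add_X_pow]
  ring

theorem sum_choose_mul_kravchukGen_mul (n : ℕ) :
    ∑ m ∈ range (n + 1), (n.choose m : ℤ[X][X]) *
      ((kravchukGen n m).map C * C (kravchukGen n m)) = 2 ^ n * (1 + C X * X) ^ n := by
  have h : (2 * (1 + C X * X) : ℤ[X][X]) = (1 - X) * (1 - C X) + (1 + X) * (1 + C X) := by
    ring
  rw [← mul_pow, h, add_pow]
  refine sum_congr rfl fun m _ => ?_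
  simp only [kravchukGen, Polynomial.map_mul, Polynomial.map_pow, Polynomial.map_sub,
    Polynomial.map_add, Polynomial.map_one, map_X, map_mul, map_pow, map_sub, map_add, map_one,
    mul_pow]
  ring

theorem kravC_row_orthogonality_general (n k k' : ℕ) :
    (∑ m ∈ Finset.range (n + 1), (n.choose m : ℤ) * kravC n k m * kravC n k' m) =
      if k = k' then (2 : ℤ) ^ n * (n.choose k : ℤ) else 0 := by
  simp_rw [kravC_eq_coeff_kravchukGen, mul_assoc, ← coeff_coeff_map_C_mul_C]
  have h := congr_arg (fun P : ℤ[X][X] => (P.coeff k).coeff k')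
    (sum_choose_mul_kravchukGen_mul n)
  simp only [finsetSum_coeff, coeff_natCast_mul] at h
  rw [h, show (2 : ℤ[X][X]) ^ n = C (C (2 ^ n)) by simp only [map_pow, map_ofNat],
    coeff_C_mul, coeff_C_mul, coeff_coeff_one_add_C_X_mul_X_pow, mul_ite, mul_zero]

theorem kravC_row_orthogonality (n k k' : ℕ) (hk : k ≤ n) (hk' : k' ≤ n) :
    (∑ m ∈ Finset.range (n + 1), (n.choose m : ℤ) * kravC n k m * kravC n k' m) =
      if k = k' then (2 : ℤ) ^ n * (n.choose k : ℤ) else 0 :=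
  kravC_row_orthogonality_general n k k'
end
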